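/- arXiv:1908.02968 — 6 statements merged into one kernel-verified Lean document; each statement's English description precedes it below -/
import Mathlib

section
/- Let R be a nontrivial commutative ring and G an abelian group, and let RG be the group ring. Then the nilradical of RG equals Φ(N) for some nontrivial subgroup N of G if and only if R is reduced and there exists a prime number p such that the characteristic of R is p and G contains an element of order p. -/
/-!
If `nilradical RG = Φ(N)` with `N ≠ 1`, then `R` is reduced because `Φ(N)` lies in the kernel of
the augmentation map, and for `n ∈ N` the element `n - 1` is nilpotent. That forces `n` to have
finite order, so `N` contains an element `g` of prime order `q`; from `g ^ q = 1` one gets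
`q (g - 1) ∈ (g - 1)² RG`, hence `q ^ K (g - 1) = 0` and `q` is nilpotent, i.e. zero, in `R`.

Conversely, in characteristic `p` the elements `n - 1` with `n` in the `p`-primary component
`G_p` are nilpotent, since `(n - 1) ^ p ^ k = n ^ p ^ k - 1`. The kernel of `RG → R[G / G_p]` is
`Φ(G_p)`, and `R[G / G_p]` is reduced because Frobenius is injective on it: `G / G_p` has no
`p`-torsion and `R` is reduced.
-/

/-- `Phi R N` is the ideal of the group ring `MonoidAlgebra R G` generated by the
elements `n - 1` with `n ∈ N`, i.e. the extension of the augmentation ideal of `RN`. -/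
noncomputable def Phi (R : Type*) {G : Type*} [CommRing R] [CommGroup G] (N : Subgroup G) :
    Ideal (MonoidAlgebra R G) :=
  Ideal.span ((fun n => MonoidAlgebra.of R G n - 1) '' (N : Set G))

open MonoidAlgebra

theorem exists_natCast_pow_mul_sub_one_eq_zero {A : Type*} [CommRing A] {x : A} {q : ℕ}
    (hx : x ^ q = 1) (hnil : IsNilpotent (x - 1)) : ∃ K : ℕ, (q : A) ^ K * (x - 1) = 0 := by
  obtain ⟨ρ, hρ⟩ : x - 1 ∣ ∑ i ∈ Finset.range q, x ^ i - q := by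
    simpa [Finset.sum_sub_distrib] using
      Finset.dvd_sum (s := Finset.range q) fun i _ => sub_dvd_pow_sub_pow x 1 i
  have hsemi : SemiconjBy (x - 1) (-((x - 1) * ρ)) q := by
    have hgeom := mul_geom_sum x q
    rw [hx, sub_self] at hgeom
    unfold SemiconjBy
    linear_combination (-1 : A) * hgeom + (x - 1) * hρ
  obtain ⟨K, hK⟩ := ((Commute.all _ ρ).isNilpotent_mul_right hnil).neg
  exact ⟨K, by rw [← (hsemi.pow_right K).eq, hK, mul_zero]⟩

theorem exists_orderOf_pow_eq_prime {G : Type*} [Monoid G] {g : G} (hg : IsOfFinOrder g)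
    (hg1 : g ≠ 1) : ∃ k q : ℕ, q.Prime ∧ orderOf (g ^ k) = q :=
  ⟨orderOf g / (orderOf g).minFac, _, Nat.minFac_prime (mt orderOf_eq_one_iff.mp hg1),
    orderOf_pow_orderOf_div hg.orderOf_pos.ne' (Nat.minFac_dvd _)⟩

theorem CommGroup.eq_one_of_pow_eq_one_quotient_primaryComponent {G : Type*} [CommGroup G]
    {p : ℕ} (x : G ⧸ CommGroup.primaryComponent G p) (hx : x ^ p = 1) : x = 1 := by
  induction x using QuotientGroup.induction_on with | H g => ?_
  rw [← QuotientGroup.mk_pow, QuotientGroup.eq_one_iff, CommGroup.mem_primaryComponent] at hx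
  obtain ⟨k, hk⟩ := hx
  rw [QuotientGroup.eq_one_iff, CommGroup.mem_primaryComponent]
  exact ⟨k + 1, by rw [pow_succ', pow_mul, hk]⟩

namespace MonoidAlgebra

instance charP {R G : Type*} [Semiring R] [Monoid G] (p : ℕ) [CharP R p] :
    CharP (MonoidAlgebra R G) p :=
  charP_of_injective_ringHom (f := singleOneRingHom) single_right_injective p

section CommRing

variable {R G : Type*} [CommRing R]

theorem coeff_pow_char_apply_pow [CommMonoid G] {p : ℕ} [Fact p.Prime] [CharP R p]
    (hinj : Function.Injective fun g : G => g ^ p) (x : MonoidAlgebra R G) (g : G) :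
    (x ^ p).coeff (g ^ p) = x.coeff g ^ p := by
  classical
  conv_lhs => rw [← sum_coeff_single x, ← frobenius_def, map_finsuppSum]
  simp only [frobenius_def, single_pow, coeff_finsuppSum, Finsupp.sum_apply, coeff_single,
    Finsupp.single_apply, hinj.eq_iff]
  simp only [Finsupp.sum, Finset.sum_ite_eq', Finsupp.mem_support_iff, ne_eq, ite_not]
  exact ite_eq_right_iff.mpr fun h => by rw [h, zero_pow (Fact.out : p.Prime).ne_zero]

theorem isReduced_of_pow_char_eq_one [IsReduced R] [CommGroup G] {p : ℕ} [Fact p.Prime]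
    [CharP R p] (hG : ∀ g : G, g ^ p = 1 → g = 1) : IsReduced (MonoidAlgebra R G) := by
  have hinj : Function.Injective fun g : G => g ^ p :=
    (injective_iff_map_eq_one (powMonoidHom p : G →* G)).mpr hG
  refine (isReduced_iff_pow_one_lt p (Fact.out : p.Prime).one_lt).mpr fun x hx => ?_
  ext g
  have hcoeff := coeff_pow_char_apply_pow hinj x g
  rw [hx, coeff_zero, Finsupp.coe_zero, Pi.zero_apply] at hcoeff
  exact IsNilpotent.eq_zero ⟨p, hcoeff.symm⟩

theorem eq_zero_of_smul_of_sub_one_eq_zero [Group G] {g : G} (hg : g ≠ 1) {r : R}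
    (h : r • (of R G g - 1) = 0) : r = 0 := by
  classical
  simpa [one_def, Finsupp.single_apply, hg] using congr(($h).coeff g)

/-- Over `R[X]` the polynomial `(X - 1) ^ k` is monic, so it survives in `RG` when `g` has
infinite order and `R[X] → RG`, `X ↦ g`, is injective. -/
theorem isOfFinOrder_of_isNilpotent_of_sub_one [Nontrivial R] [Group G] {g : G}
    (h : IsNilpotent (of R G g - 1)) : IsOfFinOrder g := by
  by_contra hg
  let φ : Polynomial R →+* MonoidAlgebra R G :=
    (mapDomainRingHom R (powersHom G g)).comp <|
      (AddMonoidAlgebra.toMultiplicative R ℕ).toRingHom.comp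
        (Polynomial.toFinsuppIso R).toRingHom
  have hφ : Function.Injective φ :=
    (mapDomain_injective (injective_pow_iff_not_isOfFinOrder.mpr hg)).comp <|
      (AddMonoidAlgebra.toMultiplicative R ℕ).injective.comp
        (Polynomial.toFinsuppIso R).injective
  have hX : φ Polynomial.X = of R G g := by
    simp [φ, Polynomial.toFinsupp_X]
  obtain ⟨k, hk⟩ := h
  have hzero : (Polynomial.X - Polynomial.C 1 : Polynomial R) ^ k = 0 :=
    hφ (by rw [map_pow, map_sub, Polynomial.C_1, map_one, hX, hk, map_zero])
  exact ((Polynomial.monic_X_sub_C (1 : R)).pow k).ne_zero hzero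

theorem isNilpotent_natCast_of_isNilpotent_of_sub_one [CommGroup G] {g : G} (hg : g ≠ 1) {q : ℕ}
    (hq : g ^ q = 1) (h : IsNilpotent (of R G g - 1)) : IsNilpotent (q : R) := by
  have hgq : of R G g ^ q = 1 := by rw [← map_pow, hq, map_one]
  obtain ⟨K, hK⟩ := exists_natCast_pow_mul_sub_one_eq_zero hgq h
  refine ⟨K, eq_zero_of_smul_of_sub_one_eq_zero hg ?_⟩
  rwa [Algebra.smul_def, map_pow, map_natCast]

end CommRing

end MonoidAlgebra

section Phi

variable {R G : Type*} [CommRing R] [CommGroup G]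

theorem Phi_le_ker_lift_one (N : Subgroup G) : Phi R N ≤ RingHom.ker (lift R R G 1) :=
  Ideal.span_le.mpr <| by rintro _ ⟨n, -, rfl⟩; simp

theorem isReduced_of_nilradical_le_Phi {N : Subgroup G}
    (h : nilradical (MonoidAlgebra R G) ≤ Phi R N) : IsReduced R := by
  refine ⟨fun r hr => ?_⟩
  have hker := Phi_le_ker_lift_one N (h (hr.map (algebraMap R (MonoidAlgebra R G))))
  rwa [RingHom.mem_ker, AlgHom.commutes, Algebra.algebraMap_self, RingHom.id_apply] at hker

/-- `g ↦ g + Φ(N)` is constant on cosets of `N`, so the quotient map `RG → RG ⧸ Φ(N)`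
factors through `R[G ⧸ N]`. -/
theorem ker_mapDomainAlgHom_mk_le_Phi (N : Subgroup G) :
    RingHom.ker (mapDomainAlgHom R R (QuotientGroup.mk' N)) ≤ Phi R N := by
  let φ : G →* MonoidAlgebra R G ⧸ Phi R N :=
    (Ideal.Quotient.mk (Phi R N) : MonoidAlgebra R G →* _).comp (of R G)
  have hN : N ≤ φ.ker := fun n hn => by
    rw [MonoidHom.mem_ker, ← map_one (Ideal.Quotient.mk (Phi R N))]
    exact Ideal.Quotient.eq.mpr (Ideal.subset_span ⟨n, hn, rfl⟩)
  have hfactor : (lift R _ _ (QuotientGroup.lift N φ hN)).comp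
      (mapDomainAlgHom R R (QuotientGroup.mk' N)) = Ideal.Quotient.mkₐ R (Phi R N) := by
    ext g; simp [φ]
  intro x hx
  rw [← Ideal.Quotient.eq_zero_iff_mem, ← Ideal.Quotient.mkₐ_eq_mk R, ← hfactor,
    AlgHom.comp_apply, RingHom.mem_ker.mp hx, map_zero]

theorem nilradical_eq_Phi_primaryComponent [IsReduced R] (p : ℕ) [Fact p.Prime] [CharP R p] :
    nilradical (MonoidAlgebra R G) = Phi R (CommGroup.primaryComponent G p) := by
  refine le_antisymm (fun x hx => ker_mapDomainAlgHom_mk_le_Phi _ ?_) ?_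
  · have := isReduced_of_pow_char_eq_one (R := R) (p := p)
      (CommGroup.eq_one_of_pow_eq_one_quotient_primaryComponent (G := G))
    exact ((mem_nilradical.mp hx).map (mapDomainAlgHom R R (QuotientGroup.mk' _))).eq_zero
  · refine Ideal.span_le.mpr ?_
    rintro _ ⟨n, hn, rfl⟩
    obtain ⟨k, hk⟩ := CommGroup.mem_primaryComponent.mp hn
    refine mem_nilradical.mpr ⟨p ^ k, ?_⟩
    rw [sub_pow_char_pow, ← map_pow, hk, map_one, one_pow, sub_self]

theorem isReduced_and_charP_of_nilradical_eq_Phi [Nontrivial R] {N : Subgroup G} (hN : N ≠ ⊥)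
    (h : nilradical (MonoidAlgebra R G) = Phi R N) :
    IsReduced R ∧ ∃ p : ℕ, p.Prime ∧ CharP R p ∧ ∃ g : G, orderOf g = p := by
  have hnil (n : G) (hn : n ∈ N) : IsNilpotent (of R G n - 1) := by
    rw [← mem_nilradical, h]
    exact Ideal.subset_span ⟨n, hn, rfl⟩
  have hred := isReduced_of_nilradical_le_Phi h.le
  obtain ⟨g, hgN, hg1⟩ := N.bot_or_exists_ne_one.resolve_left hN
  obtain ⟨k, q, hq, hord⟩ :=
    exists_orderOf_pow_eq_prime (isOfFinOrder_of_isNilpotent_of_sub_one (hnil g hgN)) hg1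
  have hgk : g ^ k ≠ 1 := fun h1 => hq.ne_one (by rw [← hord, h1, orderOf_one])
  have hq0 : (q : R) = 0 := (isNilpotent_natCast_of_isNilpotent_of_sub_one hgk
    (hord ▸ pow_orderOf_eq_one _) (hnil _ (pow_mem hgN k))).eq_zero
  exact ⟨hred, q, hq, (CharP.charP_iff_prime_eq_zero hq).mpr hq0, g ^ k, hord⟩

end Phi

theorem stmt0 (R G : Type*) [CommRing R] [Nontrivial R] [CommGroup G] :
    (∃ N : Subgroup G, N ≠ ⊥ ∧ nilradical (MonoidAlgebra R G) = Phi R N) ↔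
      (IsReduced R ∧ ∃ p : ℕ, p.Prime ∧ CharP R p ∧ ∃ g : G, orderOf g = p) := by
  constructor
  · rintro ⟨N, hN, h⟩
    exact isReduced_and_charP_of_nilradical_eq_Phi hN h
  · rintro ⟨hred, p, hp, hchar, g, hg⟩
    have : Fact p.Prime := ⟨hp⟩
    have hg1 : g ≠ 1 := fun h1 => hp.ne_one (by rw [← hg, h1, orderOf_one])
    have hgp : g ∈ CommGroup.primaryComponent G p :=
      CommGroup.mem_primaryComponent_iff_orderOf.mpr ⟨1, by rw [pow_one, hg]⟩
    exact ⟨_, fun hbot => hg1 ((Subgroup.eq_bot_iff_forall _).mp hbot g hgp),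
      nilradical_eq_Phi_primaryComponent p⟩
end

section
/- Let R be a commutative ring and G a torsion abelian group, and let RG be the group ring. Suppose the Jacobson radical of R is zero and there exists a prime number p such that the characteristic of R is p and G contains an element of order p. Then the Jacobson radical of RG equals Φ(G_p), where G_p is the p-primary component of G. -/
/-!
Each generator `n - 1` of `Φ(G_p)` is nilpotent in characteristic `p`, since
`(n - 1) ^ p ^ k = n ^ p ^ k - 1`, so `Φ(G_p)` lies in the nilradical and hence in `J(RG)`.
Conversely, `Φ(G_p)` is the kernel of `RG → R[G/G_p]`, which maps `J(RG)` into
`J(R[G/G_p])`, and the latter vanishes: `G/G_p` is torsion without elements of order `p`.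
Indeed, reducing modulo a maximal ideal of `R`, an element of the radical lands in `k[H]`
for a residue field `k` of characteristic `p` and a finite subgroup `H` of order prime to `p`.
By Maschke `k[H]` is semisimple, so its ideals are generated by idempotents, and an
idempotent in a Jacobson radical is zero. As `J(R) = 0`, all coefficients vanish.
-/

open MonoidAlgebra

theorem Ideal.jacobson_bot_le_comap {A B : Type*} [CommRing A] [CommRing B] {f : A →+* B}
    (hf : Function.Surjective f) :
    (⊥ : Ideal A).jacobson ≤ (⊥ : Ideal B).jacobson.comap f := by
  have : RingHomSurjective f := ⟨hf⟩
  simpa only [Ideal.jacobson_bot] using Ring.le_comap_jacobson f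

theorem IsIdempotentElem.eq_zero_of_mem_jacobson_bot {A : Type*} [CommRing A] {e : A}
    (he : IsIdempotentElem e) (hJ : e ∈ (⊥ : Ideal A).jacobson) : e = 0 := by
  have hunit : IsUnit (1 - e) := by
    simpa [sub_eq_add_neg, add_comm] using Ideal.mem_jacobson_bot.mp hJ (-1)
  exact hunit.mul_left_eq_zero.mp (by rw [mul_sub, mul_one, he.eq, sub_self])

theorem IsSemisimpleRing.eq_zero_of_map_mem_jacobson_bot {A B : Type*} [CommRing A]
    [IsSemisimpleRing A] [CommRing B] {ι : A →+* B} (hι : Function.Injective ι) {a : A}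
    (ha : ι a ∈ (⊥ : Ideal B).jacobson) : a = 0 := by
  obtain ⟨e, he, hspan⟩ :=
    IsSemisimpleRing.ideal_eq_span_idempotent ((⊥ : Ideal B).jacobson.comap ι)
  have heJ : e ∈ (⊥ : Ideal B).jacobson.comap ι := hspan ▸ Ideal.mem_span_singleton_self e
  have he0 : e = 0 := hι <| by
    rw [map_zero]
    exact (he.map ι).eq_zero_of_mem_jacobson_bot heJ
  have : a ∈ Ideal.span {e} := hspan ▸ ha
  simpa [he0] using this

namespace MonoidAlgebra

theorem mapDomain_surjective {R M N : Type*} [Semiring R] {f : M → N}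
    (hf : Function.Surjective f) : Function.Surjective (mapDomain (R := R) f) := fun y =>
  let ⟨c, hc⟩ := Finsupp.mapDomain_surjective hf y.coeff
  ⟨ofCoeff c, by ext; simp [mapDomain, hc]⟩

theorem jacobson_bot_eq_bot_of_field {k Q : Type*} [Field k] [CommGroup Q] (hQ : IsMulTorsion Q)
    (hcard : ∀ H : Subgroup Q, Finite H → (Nat.card H : k) ≠ 0) :
    (⊥ : Ideal k[Q]).jacobson = ⊥ := by
  refine eq_bot_iff.mpr fun x hx => ?_
  let H := Subgroup.closure (x.coeff.support : Set Q)
  have : Group.FG H := Group.closure_finset_fg _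
  have : Finite H := CommGroup.finite_of_fg_isMulTorsion H (hQ.subgroup H)
  have : NeZero (Nat.card H : k) := ⟨hcard H this⟩
  set y := comapDomain (Subtype.val : H → Q) Subtype.val_injective x
  have hy : mapDomainRingHom k H.subtype y = x :=
    mapDomain_comapDomain (fun q hq => ⟨⟨q, Subgroup.subset_closure hq⟩, rfl⟩) _
  have hy0 : y = 0 := IsSemisimpleRing.eq_zero_of_map_mem_jacobson_bot
    (mapDomain_injective (R := k) (f := H.subtype) Subtype.val_injective) (hy ▸ hx)
  rw [Ideal.mem_bot, ← hy, hy0, map_zero]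

theorem jacobson_bot_eq_bot {R Q : Type*} [CommRing R] [CommGroup Q]
    (hR : (⊥ : Ideal R).jacobson = ⊥) (hQ : IsMulTorsion Q)
    (hcard : ∀ H : Subgroup Q, Finite H → IsUnit (Nat.card H : R)) :
    (⊥ : Ideal R[Q]).jacobson = ⊥ := by
  refine eq_bot_iff.mpr fun x hx =>
    Ideal.mem_bot.mpr <| coeff_injective <| Finsupp.ext fun q => ?_
  suffices x.coeff q ∈ (⊥ : Ideal R).jacobson by simpa [hR] using this
  refine Ideal.mem_sInf.mpr fun m ⟨_, hm⟩ => ?_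
  have : m.IsMaximal := hm
  let := Ideal.Quotient.field m
  let π := mapRingHom Q (Ideal.Quotient.mk m)
  have hπx : π x = 0 := by
    have hπJ := Ideal.jacobson_bot_le_comap (f := π)
      (map_surjective _ Ideal.Quotient.mk_surjective) hx
    have hk := jacobson_bot_eq_bot_of_field (k := R ⧸ m) hQ fun H _ => by
      simpa only [map_natCast] using ((hcard H ‹_›).map (Ideal.Quotient.mk m)).ne_zero
    exact Ideal.mem_bot.mp (hk.le hπJ)
  exact Ideal.Quotient.eq_zero_iff_mem.mp (by simpa [π] using congrArg (coeff · q) hπx)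

variable {R G : Type*} [CommRing R] [CommGroup G]

theorem single_sub_single_mem_Phi {N : Subgroup G} {a b : G} (h : b⁻¹ * a ∈ N) (r : R) :
    single a r - single b r ∈ Phi R N := by
  have : single a r - single b r = single b r * (of R G (b⁻¹ * a) - 1) := by
    rw [mul_sub, mul_one, of_apply, single_mul_single, mul_inv_cancel_left, mul_one]
  exact this ▸ Ideal.mul_mem_left _ _ (Ideal.subset_span ⟨_, h, rfl⟩)

theorem sub_mapDomain_mem_Phi {N : Subgroup G} {f : G → G} (hf : ∀ a, (f a)⁻¹ * a ∈ N)
    (x : R[G]) : x - mapDomain f x ∈ Phi R N := by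
  induction x using induction_linear with
  | zero => simp [mapDomain_zero]
  | add x y hx hy => rw [mapDomain_add, add_sub_add_comm]; exact add_mem hx hy
  | single a r => rw [mapDomain_single]; exact single_sub_single_mem_Phi (hf a) r

theorem ker_mapDomainRingHom_mk' (N : Subgroup G) :
    RingHom.ker (mapDomainRingHom R (QuotientGroup.mk' N)) = Phi R N := by
  refine le_antisymm (fun x hx => ?_) ?_
  · -- `x` is congruent modulo `Φ(N)` to its push-forward along `a ↦ out ⟦a⟧`, which factors
    -- through `R[G ⧸ N]`, where `x` vanishes.
    have hout : mapDomain (fun a : G => (a : G ⧸ N).out) x = 0 := by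
      have : mapDomain (fun a : G => (a : G ⧸ N).out) x =
          mapDomain Quotient.out (mapDomainRingHom R (QuotientGroup.mk' N) x) := by
        ext
        simp only [mapDomainRingHom_apply, mapDomain, coeff_ofCoeff, ← Finsupp.mapDomain_comp]
        rfl
      rw [this, hx, mapDomain_zero]
    simpa [hout] using sub_mapDomain_mem_Phi (N := N)
      (fun a => QuotientGroup.eq.mp (QuotientGroup.out_eq' _)) x
  · rw [Phi, Ideal.span_le]
    rintro - ⟨n, hn, rfl⟩
    simp only [SetLike.mem_coe, RingHom.mem_ker, map_sub, map_one, of_apply,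
      mapDomainRingHom_apply, mapDomain_single, QuotientGroup.mk'_apply,
      (QuotientGroup.eq_one_iff n).mpr hn, one_def, sub_self]

theorem Phi_le_jacobson_bot {p : ℕ} [Fact p.Prime] [CharP R p] {N : Subgroup G}
    (hN : IsPGroup p N) : Phi R N ≤ (⊥ : Ideal R[G]).jacobson := by
  have : CharP R[G] p := charP_of_injective_algebraMap single_right_injective p
  refine (Ideal.span_le.mpr ?_).trans Ideal.radical_le_jacobson
  rintro - ⟨n, hn, rfl⟩
  obtain ⟨k, hk⟩ := hN ⟨n, hn⟩
  refine ⟨p ^ k, ?_⟩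
  rw [sub_pow_char_pow, one_pow, ← map_pow, show n ^ p ^ k = 1 from congrArg Subtype.val hk,
    map_one, sub_self]
  exact zero_mem _

end MonoidAlgebra

theorem CommGroup.orderOf_quotient_primaryComponent_ne {G : Type*} [CommGroup G] (p : ℕ)
    [Fact p.Prime] (q : G ⧸ primaryComponent G p) : orderOf q ≠ p := by
  intro hq
  obtain ⟨g, rfl⟩ := QuotientGroup.mk_surjective q
  have hgp := pow_orderOf_eq_one (g : G ⧸ primaryComponent G p)
  rw [hq, ← QuotientGroup.mk_pow, QuotientGroup.eq_one_iff] at hgp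
  obtain ⟨k, hk⟩ := mem_primaryComponent.mp hgp
  have hg : (g : G ⧸ primaryComponent G p) = 1 :=
    (QuotientGroup.eq_one_iff g).mpr
      (mem_primaryComponent.mpr ⟨k + 1, by rw [pow_succ', pow_mul, hk]⟩)
  exact (Fact.out : p.Prime).ne_one (by rw [← hq, hg, orderOf_one])

theorem isUnit_natCard_of_forall_orderOf_ne {R H : Type*} [Ring R] [Group H] [Finite H] {p : ℕ}
    [Fact p.Prime] [CharP R p] (hH : ∀ h : H, orderOf h ≠ p) : IsUnit (Nat.card H : R) :=
  (CharP.isUnit_natCast_iff Fact.out).mpr fun hp =>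
    let ⟨h, hh⟩ := exists_prime_orderOf_dvd_card' p hp
    hH h hh

theorem stmt3_general (R G : Type*) [CommRing R] [CommGroup G] (hG : Monoid.IsTorsion G)
    (hJ : (⊥ : Ideal R).jacobson = ⊥)
    (p : ℕ) [Fact p.Prime] [CharP R p] :
    (⊥ : Ideal (MonoidAlgebra R G)).jacobson = Phi R (CommGroup.primaryComponent G p) := by
  set N := CommGroup.primaryComponent G p
  refine le_antisymm ?_ (Phi_le_jacobson_bot CommGroup.primaryComponent.isPGroup)
  have hquot : (⊥ : Ideal (R[G ⧸ N])).jacobson = ⊥ :=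
    jacobson_bot_eq_bot hJ (hG.of_surjective (QuotientGroup.mk'_surjective N)) fun H _ =>
      isUnit_natCard_of_forall_orderOf_ne fun h => by
        rw [← Subgroup.orderOf_coe]; exact CommGroup.orderOf_quotient_primaryComponent_ne p _
  rw [← ker_mapDomainRingHom_mk' N]
  intro x hx
  have hxJ := Ideal.jacobson_bot_le_comap (f := mapDomainRingHom R (QuotientGroup.mk' N))
    (mapDomain_surjective (QuotientGroup.mk'_surjective N)) hx
  rwa [Ideal.mem_comap, hquot] at hxJ

theorem stmt3 (R G : Type*) [CommRing R] [CommGroup G] (hG : Monoid.IsTorsion G)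
    (hJ : (⊥ : Ideal R).jacobson = ⊥)
    (p : ℕ) [Fact p.Prime] [CharP R p] (g : G) (hg : orderOf g = p) :
    (⊥ : Ideal (MonoidAlgebra R G)).jacobson = Phi R (CommGroup.primaryComponent G p) :=
  stmt3_general R G hG hJ p
end

section
/- Let R be a field of characteristic p > 0 and let G be an abelian p-group. Then the augmentation ideal I(G) of the group ring RG (the kernel of the R-algebra homomorphism RG → R sending every element of G to 1) is the unique prime ideal of RG. -/
/-- The augmentation ideal of the group ring `MonoidAlgebra R G`: the kernel of the
`R`-algebra homomorphism `MonoidAlgebra R G → R` induced by collapsing `G` to `1`. -/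
noncomputable def augIdeal (R G : Type*) [CommRing R] [CommGroup G] :
    Ideal (MonoidAlgebra R G) :=
  RingHom.ker ((MonoidAlgebra.lift R R G) 1)

/-!
In a reduced ring of characteristic `p` the equation `u ^ p ^ k = 1` forces `u = 1`, because
`u ^ p ^ k - 1 = (u - 1) ^ p ^ k`. So every `R`-algebra map from `RG` into such a ring sends each
`g ∈ G` to `1`, i.e. factors through the augmentation `RG → R`. Applied to `RG ⧸ P` for a prime
`P`, this gives `I(G) ≤ P`; as `I(G)` is maximal, `P = I(G)`.
-/

lemma augIdeal_isMaximal (R G : Type*) [Field R] [CommGroup G] : (augIdeal R G).IsMaximal :=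
  RingHom.ker_isMaximal_of_surjective _ fun r => ⟨algebraMap R _ r, AlgHom.commutes _ r⟩

lemma IsPGroup.augIdeal_le_ker {R G A : Type*} [CommRing R] [CommGroup G] [CommRing A]
    [IsReduced A] [Algebra R A] {p : ℕ} [ExpChar A p] (hG : IsPGroup p G)
    (f : MonoidAlgebra R G →ₐ[R] A) : augIdeal R G ≤ RingHom.ker f := by
  have hf : f = (Algebra.ofId R A).comp (MonoidAlgebra.lift R R G 1) := by
    refine MonoidAlgebra.algHom_ext (fun g => ?_) (Subsingleton.elim _ _)
    obtain ⟨k, hk⟩ := hG g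
    have hpow : f (MonoidAlgebra.of R G g) ^ (p ^ k * 1) = 1 := by
      rw [mul_one, ← map_pow, ← map_pow, hk, map_one, map_one]
    simpa using (ExpChar.pow_prime_pow_mul_eq_one_iff p k 1 _).mp hpow
  intro x hx
  rw [RingHom.mem_ker, hf]
  simp [(RingHom.mem_ker.mp hx : _ = (0 : R))]

lemma IsPGroup.augIdeal_le_of_isPrime {R G : Type*} [CommRing R] [CommGroup G] {p : ℕ}
    [Fact p.Prime] [CharP R p] (hG : IsPGroup p G) (P : Ideal (MonoidAlgebra R G)) [P.IsPrime] :
    augIdeal R G ≤ P := by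
  have : CharP (MonoidAlgebra R G ⧸ P) p := by
    rw [CharP.charP_iff_prime_eq_zero Fact.out, ← map_natCast (algebraMap R _),
      CharP.cast_eq_zero, map_zero]
  intro x hx
  exact Ideal.Quotient.eq_zero_iff_mem.mp (hG.augIdeal_le_ker (Ideal.Quotient.mkₐ R P) hx)

theorem stmt7 (R G : Type*) [Field R] [CommGroup G] (p : ℕ) (hp : 0 < p) [CharP R p]
    (hG : IsPGroup p G) :
    ∀ P : Ideal (MonoidAlgebra R G), P.IsPrime ↔ P = augIdeal R G := by
  have : NeZero p := ⟨hp.ne'⟩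
  have := CharP.char_is_prime_of_pos R p
  intro P
  constructor
  · intro hP
    exact ((augIdeal_isMaximal R G).eq_of_le hP.ne_top (hG.augIdeal_le_of_isPrime P)).symm
  · rintro rfl
    exact (augIdeal_isMaximal R G).isPrime
end

section
/- Let R be a field of characteristic p > 2 and let G be a nontrivial abelian p-group. Then there exists an element x of the group ring RG such that the principal ideal xRG is a proper ideal of RG and xRG does not belong to Φ(𝔖). Moreover, one may take x = (g − 1)² for any element g of G of order p. -/
open Finset

namespace IsPGroup

variable {p : ℕ} {G : Type*} [Group G] [Fact p.Prime] (hG : IsPGroup p G)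
include hG

lemma pow_ne_one_of_lt {b : G} (hb : b ≠ 1) {k : ℕ} (hk0 : 0 < k) (hkp : k < p) : b ^ k ≠ 1 :=
  fun h => hkp.not_ge (Nat.le_of_dvd hk0 ((hG.dvd_orderOf hb).trans (orderOf_dvd_of_pow_eq_one h)))

lemma exists_orderOf_eq_prime [Nontrivial G] : ∃ g : G, orderOf g = p := by
  obtain ⟨b, hb⟩ := exists_ne (1 : G)
  exact ⟨b ^ (orderOf b / p), orderOf_pow_orderOf_div
    (hG.isOfFinOrder (Fact.out : p.Prime).ne_zero b).orderOf_pos.ne' (hG.dvd_orderOf hb)⟩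

end IsPGroup

namespace MonoidAlgebra

section CommRing

variable {R G : Type*} [CommRing R] [CommGroup G]

lemma of_sub_one_pow (b : G) (n : ℕ) :
    (of R G b - 1) ^ n =
      ∑ m ∈ range (n + 1), single (b ^ m) ((-1) ^ (m + n) * n.choose m : R) := by
  rw [sub_pow]
  refine sum_congr rfl fun m _ => ?_
  rw [← mul_one ((-1) ^ (m + n) * _ : R), ← smul_single', Algebra.smul_def, ← of_apply,
    map_pow]
  simp only [map_mul, map_pow, map_neg, map_one, map_natCast, one_pow, mul_one]
  ring

lemma coeff_of_sub_one_pow_one {b : G} {n : ℕ} (hb : ∀ k, 0 < k → k ≤ n → b ^ k ≠ 1) :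
    ((of R G b - 1) ^ n).coeff 1 = (-1) ^ n := by
  rw [of_sub_one_pow, coeff_sum, Finsupp.finsetSum_apply, sum_eq_single 0]
  · simp
  · intro k hk hk0
    exact Finsupp.single_eq_of_ne'
      (hb k (Nat.pos_of_ne_zero hk0) (Nat.lt_succ_iff.mp (mem_range.mp hk)))
  · simp

lemma of_sub_one_pow_ne_zero [Nontrivial R] {b : G} {n : ℕ}
    (hb : ∀ k, 0 < k → k ≤ n → b ^ k ≠ 1) : (of R G b - 1) ^ n ≠ 0 := fun h => by
  have h1 := coeff_of_sub_one_pow_one (R := R) hb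
  rw [h, coeff_zero, Finsupp.coe_zero, Pi.zero_apply] at h1
  exact neg_one_pow_ne_zero n h1.symm

lemma span_of_sub_one_pow_ne_top [Nontrivial R] (g : G) {n : ℕ} (hn : n ≠ 0) :
    Ideal.span {(of R G g - 1) ^ n} ≠ ⊤ := by
  intro htop
  have hunit := (Ideal.span_singleton_eq_top.mp htop).map (lift R R G 1)
  simp [zero_pow hn] at hunit

lemma of_sub_one_pow_char {p : ℕ} [Fact p.Prime] [CharP R p] {g : G} (hg : g ^ p = 1) :
    (of R G g - 1) ^ p = 0 := by
  have : CharP R[G] p := charP_of_injective_algebraMap' R p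
  rw [sub_pow_char, ← map_pow, hg, map_one, one_pow, sub_self]

lemma of_sub_one_notMem_span_sq [Nontrivial R] {p : ℕ} [Fact p.Prime] [CharP R p]
    (hG : IsPGroup p G) {g b : G} (hg : g ^ p = 1) (hb : b ≠ 1) :
    of R G b - 1 ∉ Ideal.span {(of R G g - 1) ^ 2} := by
  intro hmem
  obtain ⟨c, hc⟩ := Ideal.mem_span_singleton'.mp hmem
  have hp := (Fact.out : p.Prime).two_le
  refine of_sub_one_pow_ne_zero (b := b) (n := p - 1) (R := R) (fun k hk0 hk => ?_) ?_
  · exact hG.pow_ne_one_of_lt hb hk0 (by omega)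
  · rw [← hc, mul_pow, ← pow_mul,
      pow_eq_zero_of_le (by omega : p ≤ 2 * (p - 1)) (of_sub_one_pow_char hg), mul_zero]

end CommRing

end MonoidAlgebra

open MonoidAlgebra

lemma Phi_bot (R : Type*) {G : Type*} [CommRing R] [CommGroup G] :
    Phi R (⊥ : Subgroup G) = ⊥ :=
  Ideal.span_eq_bot.mpr (by simp [one_def])

lemma of_sub_one_mem_Phi (R : Type*) {G : Type*} [CommRing R] [CommGroup G] {N : Subgroup G}
    {b : G} (hb : b ∈ N) : of R G b - 1 ∈ Phi R N :=
  Ideal.subset_span ⟨b, hb, rfl⟩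

lemma span_of_sub_one_sq_ne_Phi {R G : Type*} [CommRing R] [Nontrivial R] [CommGroup G]
    {p : ℕ} (hp : 2 < p) [Fact p.Prime] [CharP R p] (hG : IsPGroup p G) {g : G}
    (hg : orderOf g = p) (N : Subgroup G) : Ideal.span {(of R G g - 1) ^ 2} ≠ Phi R N := by
  intro hN
  rcases N.bot_or_exists_ne_one with rfl | ⟨b, hbN, hb⟩
  · rw [Phi_bot, Ideal.span_singleton_eq_bot] at hN
    exact of_sub_one_pow_ne_zero
      (fun k hk0 hk => pow_ne_one_of_lt_orderOf (by omega) (by omega)) hN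
  · exact of_sub_one_notMem_span_sq hG (hg ▸ pow_orderOf_eq_one g) hb
      (hN ▸ of_sub_one_mem_Phi R hbN)

theorem stmt9 (R G : Type*) [Field R] [CommGroup G] [Nontrivial G]
    (p : ℕ) (hp : 2 < p) [CharP R p] (hG : IsPGroup p G) :
    (∃ x : MonoidAlgebra R G,
        Ideal.span {x} ≠ ⊤ ∧ ∀ N : Subgroup G, Ideal.span {x} ≠ Phi R N) ∧
    ∀ g : G, orderOf g = p →
      Ideal.span {(MonoidAlgebra.of R G g - 1) ^ 2} ≠ ⊤ ∧
      ∀ N : Subgroup G, Ideal.span {(MonoidAlgebra.of R G g - 1) ^ 2} ≠ Phi R N := by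
  have : Fact p.Prime := ⟨CharP.char_prime_of_ne_zero R (by omega)⟩
  have hsq : ∀ g : G, orderOf g = p →
      Ideal.span {(MonoidAlgebra.of R G g - 1) ^ 2} ≠ ⊤ ∧
      ∀ N : Subgroup G, Ideal.span {(MonoidAlgebra.of R G g - 1) ^ 2} ≠ Phi R N :=
    fun g hg =>
      ⟨span_of_sub_one_pow_ne_top g two_ne_zero, span_of_sub_one_sq_ne_Phi hp hG hg⟩
  obtain ⟨g, hg⟩ := hG.exists_orderOf_eq_prime
  exact ⟨⟨_, hsq g hg⟩, hsq⟩
end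

section
/- Let R be a field and G a cyclic group of finite order m with generator g. Let x = Σ_{i=0}^{m−1} r_i g^i be an element of the group ring RG (r_i ∈ R). Let n be a positive integer with n < m, let d = gcd(m,n), and let e = m/d. Then x belongs to the principal ideal (g^n − 1)·RG if and only if for every j with 0 ≤ j ≤ d−1 one has Σ_{i=0}^{e−1} r_{j+id} = 0. -/
/-!
Let `d = gcd(m, n)`. In the cyclic group of order `m`, `g ^ n` and `g ^ d` generate the same
subgroup `H`, so the powers `g ^ j` with `j < d` represent the cosets of `H` and
`x = Σ r_i g^i` is congruent modulo `(g ^ n - 1)` to `Σ_{j<d} s_j g ^ j`, where `s_j` is the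
coset sum in the statement. The map `RG → R[G/H]` kills `g ^ n - 1` and sends the `g ^ j` to
distinct basis elements, so `Σ_{j<d} s_j g ^ j` lies in the ideal only if all `s_j` vanish.
-/

open MonoidAlgebra Finset

theorem zpow_mem_zpowers_pow_iff {G : Type*} [Group G] (g : G) (n : ℕ) (t : ℤ) :
    g ^ t ∈ Subgroup.zpowers (g ^ n) ↔ ((orderOf g).gcd n : ℤ) ∣ t := by
  have hmul : ∀ k : ℤ, (g ^ n) ^ k = g ^ ((n : ℤ) * k) := fun k => by
    rw [zpow_mul, zpow_natCast]
  simp only [Subgroup.mem_zpowers_iff, hmul, zpow_eq_zpow_iff_modEq, Int.modEq_iff_dvd]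
  constructor
  · rintro ⟨k, hk⟩
    have hgcd_n : ((orderOf g).gcd n : ℤ) ∣ n * k :=
      (Int.natCast_dvd_natCast.2 (Nat.gcd_dvd_right _ _)).mul_right k
    simpa using dvd_add hgcd_n ((Int.natCast_dvd_natCast.2 (Nat.gcd_dvd_left _ _)).trans hk)
  · rintro ⟨q, rfl⟩
    refine ⟨Nat.gcdB (orderOf g) n * q, Nat.gcdA (orderOf g) n * q, ?_⟩
    rw [Nat.gcd_eq_gcd_ab]
    ring

theorem injOn_mk_pow_range_gcd {G : Type*} [Group G] (g : G) (n : ℕ) :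
    Set.InjOn (fun j : ℕ => ((g ^ j : G) : G ⧸ Subgroup.zpowers (g ^ n)))
      (range ((orderOf g).gcd n)) := by
  intro i hi j hj hij
  simp only [coe_range, Set.mem_Iio] at hi hj
  have hdvd : ((orderOf g).gcd n : ℤ) ∣ -(i : ℤ) + j := by
    rw [← zpow_mem_zpowers_pow_iff, zpow_add, zpow_neg, zpow_natCast, zpow_natCast]
    exact QuotientGroup.eq.1 hij
  have := Int.eq_zero_of_abs_lt_dvd hdvd (by rw [abs_lt]; omega)
  omega

theorem Finset.sum_range_mul_eq_sum_sum {M : Type*} [AddCommMonoid M] (f : ℕ → M) (d e : ℕ) :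
    ∑ i ∈ range (d * e), f i = ∑ j ∈ range d, ∑ k ∈ range e, f (j + k * d) := by
  induction e with
  | zero => simp
  | succ e ih =>
    rw [Nat.mul_succ, sum_range_add, ih]
    simp only [sum_range_succ, sum_add_distrib]
    congr 2 with j
    rw [add_comm, mul_comm]

section GroupRing

variable {R G : Type*} [CommRing R]

theorem single_mul_sub_single_mem_span_of_sub_one [CommMonoid G] {h b : G}
    (hb : b ∈ Submonoid.powers h) (a : G) (r : R) :
    single (a * b) r - single a r ∈ Ideal.span {of R G h - 1} := by
  obtain ⟨k, rfl⟩ := hb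
  have hfactor : single (a * h ^ k) r - single a r = single a r * ((of R G h) ^ k - 1) := by
    rw [mul_sub, mul_one, ← map_pow, of_apply, single_mul_single, mul_one]
  rw [hfactor, Ideal.mem_span_singleton]
  exact dvd_mul_of_dvd_right (by simpa using sub_dvd_pow_sub_pow (of R G h) 1 k) _

theorem span_of_sub_one_le_ker_mapDomain_mk [CommGroup G] (h : G) :
    Ideal.span {of R G h - 1} ≤
      RingHom.ker (mapDomainRingHom R (QuotientGroup.mk' (Subgroup.zpowers h))) := by
  rw [Ideal.span_le, Set.singleton_subset_iff, SetLike.mem_coe, RingHom.mem_ker, map_sub, map_one,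
    sub_eq_zero]
  have hh : (QuotientGroup.mk' (Subgroup.zpowers h)) h = 1 :=
    (QuotientGroup.eq_one_iff h).2 (Subgroup.mem_zpowers h)
  rw [of_apply, mapDomainRingHom_apply, mapDomain_single, hh, one_def]

theorem sum_single_mem_span_of_sub_one_iff [CommGroup G] {ι : Type*} (h : G) (s : Finset ι)
    (a : ι → G) (ha : Set.InjOn (fun i => (a i : G ⧸ Subgroup.zpowers h)) s) (c : ι → R) :
    ∑ i ∈ s, single (a i) (c i) ∈ Ideal.span {of R G h - 1} ↔ ∀ i ∈ s, c i = 0 := by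
  refine ⟨fun hmem i hi => ?_, fun hc => Ideal.sum_mem _ fun i hi => by simp [hc i hi]⟩
  have hzero := span_of_sub_one_le_ker_mapDomain_mk h hmem
  rw [RingHom.mem_ker, map_sum] at hzero
  have hcoeff := congr_arg (fun y => y.coeff (a i : G ⧸ Subgroup.zpowers h)) hzero
  simp only [mapDomainRingHom_apply, mapDomain_single, coeff_sum, coeff_single,
    Finsupp.finsetSum_apply, Finsupp.single_apply, QuotientGroup.mk'_apply, coeff_zero,
    Finsupp.zero_apply] at hcoeff
  rwa [sum_eq_single_of_mem i hi fun j hj hji => if_neg fun hij => hji (ha hj hi hij),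
    if_pos rfl] at hcoeff

end GroupRing

theorem stmt14_general {R G : Type*} [Field R] [CommGroup G] (m : ℕ) (hm : 0 < m)
    (g : G) (hgen : ∀ a : G, a ∈ Subgroup.zpowers g) (hcard : Nat.card G = m)
    (r : Fin m → R) (x : MonoidAlgebra R G)
    (hx : x = ∑ i : Fin m, MonoidAlgebra.single (g ^ (i : ℕ)) (r i))
    (n : ℕ) :
    x ∈ Ideal.span {MonoidAlgebra.of R G (g ^ n) - 1} ↔
      ∀ j : ℕ, j < Nat.gcd m n →
        ∑ i ∈ Finset.range (m / Nat.gcd m n),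
          r ⟨(j + i * Nat.gcd m n) % m, Nat.mod_lt _ hm⟩ = 0 := by
  set d := m.gcd n
  have hord : orderOf g = m := (orderOf_eq_card_of_forall_mem_zpowers hgen).trans hcard
  have : Finite G := Nat.finite_of_card_ne_zero (hcard ▸ hm.ne')
  set r' : ℕ → R := fun i => r ⟨i % m, Nat.mod_lt _ hm⟩
  have hx' : x = ∑ j ∈ range d, ∑ k ∈ range (m / d),
      single (g ^ j * g ^ (k * d)) (r' (j + k * d)) := by
    have hrange : range m = range (d * (m / d)) := by rw [Nat.mul_div_cancel' (m.gcd_dvd_left n)]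
    have hfin : ∀ i : Fin m, r i = r' i := fun i => by simp [r', Nat.mod_eq_of_lt i.2]
    simp only [hx, hfin, Fin.sum_univ_eq_sum_range (fun i => single (g ^ i) (r' i)), hrange,
      sum_range_mul_eq_sum_sum, pow_add]
  have hpow : ∀ k, g ^ (k * d) ∈ Submonoid.powers (g ^ n) := fun k =>
    mem_powers_iff_mem_zpowers.2 <| by
      rw [← zpow_natCast g (k * d), zpow_mem_zpowers_pow_iff, hord]
      exact Int.natCast_dvd_natCast.2 (dvd_mul_left _ _)
  have hdiff : x - ∑ j ∈ range d, single (g ^ j) (∑ k ∈ range (m / d), r' (j + k * d)) ∈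
      Ideal.span {of R G (g ^ n) - 1} := by
    simp only [hx', ← sum_sub_distrib, ← singleAddHom_apply, map_sum]
    exact Ideal.sum_mem _ fun j _ => Ideal.sum_mem _ fun k _ =>
      single_mul_sub_single_mem_span_of_sub_one (hpow k) _ _
  have hinj := injOn_mk_pow_range_gcd g n
  rw [hord] at hinj
  rw [← sub_add_cancel x, Ideal.add_mem_iff_right _ hdiff,
    sum_single_mem_span_of_sub_one_iff _ _ _ hinj]
  simp only [mem_range]
  rfl

theorem stmt14 {R G : Type*} [Field R] [CommGroup G] (m : ℕ) (hm : 0 < m)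
    (g : G) (hgen : ∀ a : G, a ∈ Subgroup.zpowers g) (hcard : Nat.card G = m)
    (r : Fin m → R) (x : MonoidAlgebra R G)
    (hx : x = ∑ i : Fin m, MonoidAlgebra.single (g ^ (i : ℕ)) (r i))
    (n : ℕ) (hn0 : 0 < n) (hnm : n < m) :
    x ∈ Ideal.span {MonoidAlgebra.of R G (g ^ n) - 1} ↔
      ∀ j : ℕ, j < Nat.gcd m n →
        ∑ i ∈ Finset.range (m / Nat.gcd m n),
          r ⟨(j + i * Nat.gcd m n) % m, Nat.mod_lt _ hm⟩ = 0 :=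
  stmt14_general m hm g hgen hcard r x hx n
end

section
/- Let R be an integral domain and G an infinite cyclic group, and let x be a nonzero element of the group ring RG. Then the following are equivalent: (1) xRG = Φ(N) for some nontrivial subgroup N of G; (2) x = u·g₁ − u·g₂ for some unit u of R and some elements g₁, g₂ of G. Moreover, if these hold, then xRG = Φ(⟨h⟩) where h = g₁g₂⁻¹. -/
open MonoidAlgebra

lemma twoUniqueProds_of_isCyclic_of_infinite (G : Type*) [Group G] [IsCyclic G] [Infinite G] :
    TwoUniqueProds G :=
  (intCyclicMulEquiv (G := G)).twoUniqueProds_iff.mp inferInstance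

namespace MonoidAlgebra

variable {R G : Type*}

/-- Two distinct uniquely attained products would give two distinct monomials in `x * y`. -/
lemma card_support_mul_card_support_le_one [Semiring R] [NoZeroDivisors R] [Mul G]
    [TwoUniqueProds G] {x y : MonoidAlgebra R G} (h : (x * y).coeff.support.card ≤ 1) :
    x.coeff.support.card * y.coeff.support.card ≤ 1 := by
  by_contra! hc
  obtain ⟨p₁, h₁, p₂, h₂, hne, hu₁, hu₂⟩ := TwoUniqueProds.uniqueMul_of_one_lt_card hc
  rw [Finset.mem_product] at h₁ h₂
  have mem_support : ∀ p : G × G, p.1 ∈ x.coeff.support → p.2 ∈ y.coeff.support →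
      UniqueMul x.coeff.support y.coeff.support p.1 p.2 → p.1 * p.2 ∈ (x * y).coeff.support :=
    fun p hp₁ hp₂ hu => by
      rw [Finsupp.mem_support_iff, coeff_mul_mul_of_uniqueMul hu]
      exact mul_ne_zero (Finsupp.mem_support_iff.1 hp₁) (Finsupp.mem_support_iff.1 hp₂)
  have heq : p₂.1 * p₂.2 = p₁.1 * p₁.2 := Finset.card_le_one.1 h _
    (mem_support p₂ h₂.1 h₂.2 hu₂) _ (mem_support p₁ h₁.1 h₁.2 hu₁)
  obtain ⟨e₁, e₂⟩ := hu₁ h₂.1 h₂.2 heq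
  exact hne (Prod.ext e₁.symm e₂.symm)

lemma isUnit_single [Semiring R] [Group G] (u : Rˣ) (g : G) : IsUnit (single g (u : R)) :=
  ⟨⟨single g u, single g⁻¹ ↑u⁻¹, by rw [single_mul_single, mul_inv_cancel, u.mul_inv, one_def],
    by rw [single_mul_single, inv_mul_cancel, u.inv_mul, one_def]⟩, rfl⟩

lemma of_sub_one_mul_single [Ring R] [Monoid G] (h a : G) (r : R) :
    (of R G h - 1) * single a r = single (h * a) r - single a r := by
  rw [sub_mul, of_apply, single_mul_single, one_mul, one_mul]

section Units

variable [Semiring R] [NoZeroDivisors R] [Nontrivial R] [Monoid G] [TwoUniqueProds G]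

lemma card_support_eq_one_of_mul_eq_one {x y : MonoidAlgebra R G} (h : x * y = 1) :
    x.coeff.support.card = 1 := by
  have card_pos : ∀ {z : MonoidAlgebra R G}, z ≠ 0 → 0 < z.coeff.support.card := fun hz =>
    Finset.card_pos.2 (Finsupp.support_nonempty_iff.2 (coeff_eq_zero.not.2 hz))
  have hle : x.coeff.support.card * y.coeff.support.card ≤ 1 :=
    card_support_mul_card_support_le_one (by rw [h, support_coeff_one, Finset.card_one])
  have hy := card_pos (right_ne_zero_of_mul_eq_one h)
  exact le_antisymm (hle.trans' (Nat.le_mul_of_pos_right _ hy))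
    (card_pos (left_ne_zero_of_mul_eq_one h))

lemma exists_single_of_isUnit {x : MonoidAlgebra R G} (hx : IsUnit x) :
    ∃ (r : Rˣ) (a : G), x = single a (r : R) := by
  obtain ⟨u, rfl⟩ := hx
  obtain ⟨a, r, -, hu⟩ :=
    Finsupp.card_support_eq_one'.1 (card_support_eq_one_of_mul_eq_one u.mul_inv)
  obtain ⟨b, s, -, hv⟩ :=
    Finsupp.card_support_eq_one'.1 (card_support_eq_one_of_mul_eq_one u.inv_mul)
  replace hu : (u : MonoidAlgebra R G) = single a r := coeff_injective hu
  replace hv : ((u⁻¹ : (MonoidAlgebra R G)ˣ) : MonoidAlgebra R G) = single b s := coeff_injective hv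
  have mul_eq_one : ∀ {a b : G} {r s : R}, single a r * single b s = 1 → r * s = 1 := by
    intro a b r s h
    rw [single_mul_single, one_def, single_inj] at h
    exact (h.resolve_right fun h => one_ne_zero h.2).2
  exact ⟨⟨r, s, mul_eq_one (hu ▸ hv ▸ u.mul_inv), mul_eq_one (hu ▸ hv ▸ u.inv_mul)⟩, a, hu⟩

end Units

end MonoidAlgebra

section Phi

variable (R : Type*) {G : Type*} [CommRing R] [CommGroup G]

lemma Phi_closure (S : Set G) :
    Phi R (Subgroup.closure S) = Ideal.span ((fun s => of R G s - 1) '' S) := by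
  refine le_antisymm ?_ (Ideal.span_mono (Set.image_mono Subgroup.subset_closure))
  rw [Phi, Ideal.span_le]
  rintro _ ⟨n, hn, rfl⟩
  change of R G n - 1 ∈ Ideal.span _
  induction hn using Subgroup.closure_induction with
  | mem s hs => exact Ideal.subset_span ⟨s, hs, rfl⟩
  | one => rw [map_one, sub_self]; exact zero_mem _
  | mul a b _ _ iha ihb =>
    have : of R G (a * b) - 1 = of R G a * (of R G b - 1) + (of R G a - 1) := by
      rw [map_mul]; ring
    exact this ▸ add_mem (Ideal.mul_mem_left _ _ ihb) iha
  | inv a _ iha =>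
    have : of R G a⁻¹ - 1 = -(of R G a⁻¹ * (of R G a - 1)) := by
      rw [mul_sub, ← map_mul, inv_mul_cancel, map_one, mul_one, neg_sub]
    exact this ▸ neg_mem (Ideal.mul_mem_left _ _ iha)

lemma Phi_zpowers (h : G) :
    Phi R (Subgroup.zpowers h) = Ideal.span {of R G h - 1} := by
  rw [Subgroup.zpowers_eq_closure, Phi_closure, Set.image_singleton]

variable {R}

lemma span_single_sub_single (u : Rˣ) (g₁ g₂ : G) :
    Ideal.span {single g₁ (u : R) - single g₂ (u : R)} = Phi R (Subgroup.zpowers (g₁ * g₂⁻¹)) := by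
  rw [Phi_zpowers, ← Ideal.span_singleton_mul_right_unit (isUnit_single u g₂) (of R G _ - 1),
    of_sub_one_mul_single, inv_mul_cancel_right]

lemma exists_eq_single_sub_single_of_span_eq [IsDomain R] [TwoUniqueProds G]
    {x : MonoidAlgebra R G} {h : G} (hx : Ideal.span {x} = Ideal.span {of R G h - 1}) :
    ∃ (u : Rˣ) (g₁ g₂ : G), x = single g₁ (u : R) - single g₂ (u : R) := by
  obtain ⟨w, hw⟩ := Ideal.span_singleton_eq_span_singleton.1 hx
  obtain ⟨u, a, hwa⟩ := exists_single_of_isUnit w⁻¹.isUnit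
  refine ⟨u, h * a, a, ?_⟩
  rw [← of_sub_one_mul_single, ← hwa, ← hw, Units.mul_inv_cancel_right]

end Phi

theorem stmt18 {R G : Type*} [CommRing R] [IsDomain R] [CommGroup G]
    [IsCyclic G] [Infinite G] (x : MonoidAlgebra R G) (hx0 : x ≠ 0) :
    ((∃ N : Subgroup G, N ≠ ⊥ ∧ Ideal.span {x} = Phi R N) ↔
      ∃ (u : Rˣ) (g₁ g₂ : G),
        x = MonoidAlgebra.single g₁ (u : R) - MonoidAlgebra.single g₂ (u : R)) ∧
    ∀ (u : Rˣ) (g₁ g₂ : G),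
      x = MonoidAlgebra.single g₁ (u : R) - MonoidAlgebra.single g₂ (u : R) →
        Ideal.span {x} = Phi R (Subgroup.zpowers (g₁ * g₂⁻¹)) := by
  have := twoUniqueProds_of_isCyclic_of_infinite G
  refine ⟨⟨?_, ?_⟩, fun u g₁ g₂ hx => hx ▸ span_single_sub_single u g₁ g₂⟩
  · rintro ⟨N, -, hN⟩
    obtain ⟨h, rfl⟩ := N.isCyclic_iff_exists_zpowers_eq_top.1 inferInstance
    exact exists_eq_single_sub_single_of_span_eq (hN.trans (Phi_zpowers R h))
  · rintro ⟨u, g₁, g₂, rfl⟩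
    refine ⟨_, ?_, span_single_sub_single u g₁ g₂⟩
    rw [Ne, Subgroup.zpowers_eq_bot, mul_inv_eq_one]
    rintro rfl
    exact hx0 (sub_self _)
end
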